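/- arXiv:1310.6721 — 3 statements merged into one kernel-verified Lean document; each statement's English description precedes it below -/
import Mathlib

section
/- Let p > 3 be a prime and let P, Q be elements of ℤ/pℤ with P·Q ≠ 0. Let n = (p − (p/3))/3, where (p/3) denotes the Legendre symbol of p modulo 3. If U_n(P,Q) = 0 in ℤ/pℤ, then U_{2⌊p/3⌋+1}(P,Q) = (−Q)^{⌊p/3⌋} in ℤ/pℤ. Moreover, if in addition P² − 3Q ≠ 0 in ℤ/pℤ, then conversely U_{2⌊p/3⌋+1}(P,Q) = (−Q)^{⌊p/3⌋} implies U_n(P,Q) = 0 in ℤ/pℤ. -/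
/-! The doubling formulas `U_{2k+1} ∓ Q^k = U_k V_{k+1}`, resp. `U_{k+1} V_k`, with the companion
sequence `V`, turn the statement into the claim that the relevant factor `V_j`, where
`3j = p ± 2`, does not vanish modulo `p`. Write `V_j = α^j + β^j` with `α, β` the roots of
`X² - PX + Q`. If `V_j = 0` then `α^{3j} = -β^{3j}`, and since Frobenius permutes `{α, β}`,
comparing `α^{p±2}` with `β^{p±2}` forces `P Q (P² - 3Q) = 0`. -/

/-- The Lucas sequence `U_n(P, Q)` with `U_0 = 0`, `U_1 = 1`,
`U_{n+1} = P * U_n - Q * U_{n-1}`. -/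
def lucasU {R : Type*} [CommRing R] (P Q : R) : ℕ → R
  | 0 => 0
  | 1 => 1
  | n + 2 => P * lucasU P Q (n + 1) - Q * lucasU P Q n

def lucasV {R : Type*} [CommRing R] (P Q : R) : ℕ → R
  | 0 => 2
  | 1 => P
  | n + 2 => P * lucasV P Q (n + 1) - Q * lucasV P Q n

section Identities

variable {R : Type*} [CommRing R] (P Q : R)

@[simp] lemma lucasU_zero : lucasU P Q 0 = 0 := rfl

@[simp] lemma lucasU_one : lucasU P Q 1 = 1 := rfl

lemma lucasU_add_two (n : ℕ) :
    lucasU P Q (n + 2) = P * lucasU P Q (n + 1) - Q * lucasU P Q n := rfl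

lemma lucasV_add_two (n : ℕ) :
    lucasV P Q (n + 2) = P * lucasV P Q (n + 1) - Q * lucasV P Q n := rfl

lemma lucasU_cassini : ∀ n : ℕ,
    lucasU P Q (n + 1) ^ 2 - P * lucasU P Q (n + 1) * lucasU P Q n + Q * lucasU P Q n ^ 2
      = Q ^ n
  | 0 => by simp
  | n + 1 => by
    linear_combination Q * lucasU_cassini n
      + (lucasU P Q (n + 2) - Q * lucasU P Q n) * lucasU_add_two P Q n

lemma lucasU_add_add_one (m : ℕ) : ∀ n : ℕ,
    lucasU P Q (m + n + 1)
      = lucasU P Q (m + 1) * lucasU P Q (n + 1) - Q * lucasU P Q m * lucasU P Q n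
  | 0 => by simp
  | 1 => by
    simp only [lucasU_add_two, zero_add, lucasU_one, lucasU_zero]
    ring
  | n + 2 => by
    rw [show m + (n + 2) + 1 = m + n + 1 + 2 by ring, lucasU_add_two,
      show m + n + 1 + 1 = m + (n + 1) + 1 by ring, lucasU_add_add_one m (n + 1),
      lucasU_add_add_one m n, lucasU_add_two P Q (n + 1), lucasU_add_two P Q n]
    ring

lemma lucasU_two_mul_add_one (n : ℕ) :
    lucasU P Q (2 * n + 1) = lucasU P Q (n + 1) ^ 2 - Q * lucasU P Q n ^ 2 := by
  rw [two_mul, lucasU_add_add_one]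
  ring

lemma lucasV_eq : ∀ n : ℕ, lucasV P Q n = 2 * lucasU P Q (n + 1) - P * lucasU P Q n
  | 0 => by simp [lucasV]
  | 1 => by
    simp only [lucasV, lucasU_add_two, zero_add, lucasU_one, lucasU_zero]
    ring
  | n + 2 => by
    rw [lucasV_add_two, lucasV_eq (n + 1), lucasV_eq n, lucasU_add_two P Q (n + 1),
      lucasU_add_two P Q n]
    ring

lemma lucasU_two_mul_add_one_eq_pow_iff (n : ℕ) :
    lucasU P Q (2 * n + 1) = Q ^ n ↔ lucasU P Q n * lucasV P Q (n + 1) = 0 := by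
  have h : lucasU P Q (2 * n + 1) - Q ^ n = lucasU P Q n * lucasV P Q (n + 1) := by
    rw [lucasU_two_mul_add_one, lucasV_eq, lucasU_add_two, ← lucasU_cassini P Q n]
    ring
  rw [← sub_eq_zero, h]

lemma lucasU_two_mul_add_one_eq_neg_pow_iff (n : ℕ) :
    lucasU P Q (2 * n + 1) = -Q ^ n ↔ lucasU P Q (n + 1) * lucasV P Q n = 0 := by
  have h : lucasU P Q (2 * n + 1) + Q ^ n = lucasU P Q (n + 1) * lucasV P Q n := by
    rw [lucasU_two_mul_add_one, lucasV_eq, ← lucasU_cassini P Q n]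
    ring
  rw [eq_neg_iff_add_eq_zero, h]

lemma map_lucasV {S : Type*} [CommRing S] (φ : R →+* S) {a b : S}
    (hs : a + b = φ P) (hm : a * b = φ Q) : ∀ n : ℕ, φ (lucasV P Q n) = a ^ n + b ^ n
  | 0 => by rw [lucasV, map_ofNat, pow_zero, pow_zero, one_add_one_eq_two]
  | 1 => by simp [lucasV, hs]
  | n + 2 => by
    rw [lucasV_add_two, map_sub, map_mul, map_mul, map_lucasV φ hs hm (n + 1),
      map_lucasV φ hs hm n, ← hs, ← hm]
    ring

end Identities

section Nonvanishing

variable {S : Type*} [CommRing S]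

/-- If `g, d` is a second pair of roots of `X² - (a + b) X + ab`, then in a domain `g ∈ {a, b}`;
`g = a` turns the hypothesis into `a³ = -b³` and `g = b` into `ab(a + b) = 0`. -/
lemma mul_mul_sq_sub_three_mul_eq_zero {a b g d : S} (hs : g + d = a + b) (hm : g * d = a * b)
    (h : g * a ^ 2 = -(d * b ^ 2)) :
    (a + b) * (a * b) * ((a + b) ^ 2 - 3 * (a * b)) = 0 := by
  have ha : (a + b) * a ^ 2 = (a + b) * (d * (a - b)) := by
    linear_combination h - a ^ 2 * hs
  have hb : (a + b) * b ^ 2 = -((a + b) * (g * (a - b))) := by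
    linear_combination h - b ^ 2 * hs
  linear_combination b ^ 2 * ha + d * (a - b) * hb - (a + b) * (a - b) ^ 2 * hm

lemma mul_mul_sq_sub_three_mul_eq_zero_of_pow_add_pow_eq_zero {p : ℕ} [Fact p.Prime]
    [CharP S p] {a b : S} (hs : (a + b) ^ p = a + b) (hm : (a * b) ^ p = a * b) {j : ℕ}
    (hj : 3 * j = p + 2 ∨ 3 * j + 2 = p) (hV : a ^ j + b ^ j = 0) :
    (a + b) * (a * b) * ((a + b) ^ 2 - 3 * (a * b)) = 0 := by
  have hfs : a ^ p + b ^ p = a + b := by rw [← add_pow_char, hs]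
  have hfm : a ^ p * b ^ p = a * b := by rw [← mul_pow, hm]
  have hcube : a ^ (3 * j) = -b ^ (3 * j) := by
    rw [mul_comm 3 j, pow_mul, pow_mul]
    linear_combination (a ^ (2 * j) - a ^ j * b ^ j + b ^ (2 * j)) * hV
  rcases hj with hj | hj
  · rw [hj, pow_add, pow_add] at hcube
    exact mul_mul_sq_sub_three_mul_eq_zero hfs hfm (by linear_combination hcube)
  · have h : b ^ p * a ^ 2 = -(a ^ p * b ^ 2) := by
      rw [← hj, pow_add, pow_add]
      linear_combination (a ^ 2 * b ^ 2) * hcube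
    have := mul_mul_sq_sub_three_mul_eq_zero (by rw [add_comm, hfs]) (by rw [mul_comm, hfm]) h
    linear_combination this

open Polynomial in
lemma lucasV_ne_zero {p : ℕ} [Fact p.Prime] {P Q : ZMod p} (hP : P ≠ 0) (hQ : Q ≠ 0)
    (h3 : P ^ 2 - 3 * Q ≠ 0) {j : ℕ} (hj : 3 * j = p + 2 ∨ 3 * j + 2 = p) :
    lucasV P Q j ≠ 0 := by
  intro hV
  let φ := algebraMap (ZMod p) (AlgebraicClosure (ZMod p))
  have hdeg : (X ^ 2 - C (φ P) * X + C (φ Q)).degree = 2 := by compute_degree!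
  obtain ⟨a, ha⟩ := IsAlgClosed.exists_root _ (by rw [hdeg]; decide)
  simp only [IsRoot, eval_add, eval_sub, eval_mul, eval_pow, eval_X, eval_C] at ha
  have hs : a + (φ P - a) = φ P := by ring
  have hm : a * (φ P - a) = φ Q := by linear_combination -ha
  have hzero := mul_mul_sq_sub_three_mul_eq_zero_of_pow_add_pow_eq_zero
    (by rw [hs, ← map_pow, ZMod.pow_card]) (by rw [hm, ← map_pow, ZMod.pow_card]) hj
    (by rw [← map_lucasV P Q φ hs hm, hV, map_zero])
  have hφ : φ (P * Q * (P ^ 2 - 3 * Q)) = 0 := by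
    rw [← hzero, hs, hm]
    simp [map_ofNat]
  exact mul_ne_zero (mul_ne_zero hP hQ) h3 ((map_eq_zero φ).mp hφ)

end Nonvanishing

theorem stmt_0 (p : ℕ) [Fact p.Prime] (hp : 3 < p) (P Q : ZMod p)
    (hPQ : P * Q ≠ 0) :
    (lucasU P Q (if p % 3 = 1 then (p - 1) / 3 else (p + 1) / 3) = 0 →
      lucasU P Q (2 * (p / 3) + 1) = (-Q) ^ (p / 3)) ∧
    (P ^ 2 - 3 * Q ≠ 0 →
      lucasU P Q (2 * (p / 3) + 1) = (-Q) ^ (p / 3) →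
      lucasU P Q (if p % 3 = 1 then (p - 1) / 3 else (p + 1) / 3) = 0) := by
  have hprime : p.Prime := Fact.out
  have hP : P ≠ 0 := left_ne_zero_of_mul hPQ
  have hQ : Q ≠ 0 := right_ne_zero_of_mul hPQ
  have hodd : p % 2 = 1 := Nat.odd_iff.mp (hprime.odd_of_ne_two (by omega))
  have h3 : p % 3 ≠ 0 := fun h ↦ by
    have := (Nat.prime_dvd_prime_iff_eq Nat.prime_three hprime).mp (Nat.dvd_of_mod_eq_zero h)
    omega
  by_cases h1 : p % 3 = 1
  · have hk : Even (p / 3) := Nat.even_iff.mpr (by omega)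
    rw [if_pos h1, show (p - 1) / 3 = p / 3 by omega, hk.neg_pow,
      lucasU_two_mul_add_one_eq_pow_iff]
    exact ⟨fun h ↦ by rw [h, zero_mul], fun hD h ↦
      (mul_eq_zero.mp h).resolve_right (lucasV_ne_zero hP hQ hD (Or.inl (by omega)))⟩
  · have hk : Odd (p / 3) := Nat.odd_iff.mpr (by omega)
    rw [if_neg h1, show (p + 1) / 3 = p / 3 + 1 by omega, hk.neg_pow,
      lucasU_two_mul_add_one_eq_neg_pow_iff]
    exact ⟨fun h ↦ by rw [h, zero_mul], fun hD h ↦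
      (mul_eq_zero.mp h).resolve_right (lucasV_ne_zero hP hQ hD (Or.inr (by omega)))⟩
end

section
/- Let p > 3 be a prime. Then, in ℤ/pℤ: (1) if p ≠ 11, Σ_{k=1}^{⌊p/3⌋} C(3k,k)·36^k = (6/11)·(χ_p(−2) − 1); (2) if p ≠ 13, Σ_{k=1}^{⌊p/3⌋} C(3k,k)·(−100)^k = (6/13)·((−1)^{(p−1)/2} − 1); (3) Σ_{k=1}^{⌊p/3⌋} C(3k,k)·(1/8)^k = (3/2)·(χ_p(5) − 1); (4) if p ≠ 7, Σ_{k=1}^{⌊p/3⌋} C(3k,k)·(3/8)^k = (9/14)·(χ_p(−3) − 1). -/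
/-!
The proof rests on the congruence `C(3k, k) ≡ (-1)^k C(p - 1 - 2k, k) (mod p)` for `3k ≤ p`, which
turns `∑_{k=1}^{⌊p/3⌋} C(3k, k) x^k` into `u (p - 1) - 1`, where `u n = ∑_k C(n - 2k, k) (-x)^k`
satisfies `u (n + 3) = u (n + 2) - x u n`. When `x = a² - a³` the characteristic polynomial
`t³ - t² + x` has the root `a`, and its other two roots `(1 - a ± s) / 2`, with
`s² = -3a² + 2a + 1`, lie in `𝔽_p(s)`. Lagrange interpolation expresses `u (p - 1)` through the
`(p + 1)`-st powers of the roots, and the Frobenius `s ↦ s^p = χ_p(s²) s` either fixes or swaps the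
two conjugate roots, which gives
`u (p - 1) - 1 = (χ_p(-3a² + 2a + 1) - 1)(3a - 3) / (2(3a - 2))`.
The four identities are the cases `a = -3, 5, 1/2, -1/2`.
-/

open Finset
open scoped Nat

def diagChooseSum {R : Type*} [CommRing R] (y : R) (n : ℕ) : R :=
  ∑ k ∈ range (n + 1), ((n - 2 * k).choose k : R) * y ^ k

section CommRing

variable {R : Type*} [CommRing R]

lemma diagChooseSum_eq_sum_range (y : R) {n m : ℕ} (h : n < 3 * m) :
    diagChooseSum y n = ∑ k ∈ range m, ((n - 2 * k).choose k : R) * y ^ k := by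
  have vanish : ∀ k, n < 3 * k → ((n - 2 * k).choose k : R) * y ^ k = 0 := fun k hk => by
    rw [Nat.choose_eq_zero_of_lt (by omega), Nat.cast_zero, zero_mul]
  rcases le_total m (n + 1) with hm | hm
  · exact (sum_subset (range_subset_range.mpr hm) fun k _ hk =>
      vanish k (by simp at hk; omega)).symm
  · exact sum_subset (range_subset_range.mpr hm) fun k _ hk => vanish k (by simp at hk; omega)

lemma diagChooseSum_zero (y : R) : diagChooseSum y 0 = 1 := by
  simp [diagChooseSum]

lemma diagChooseSum_one (y : R) : diagChooseSum y 1 = 1 := by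
  simp [diagChooseSum, sum_range_succ]

lemma diagChooseSum_two (y : R) : diagChooseSum y 2 = 1 := by
  simp [diagChooseSum, sum_range_succ]

lemma diagChooseSum_add_three (y : R) (n : ℕ) :
    diagChooseSum y (n + 3) = diagChooseSum y (n + 2) + y * diagChooseSum y n := by
  have pascal : ∀ k, ((n + 3 - 2 * (k + 1)).choose (k + 1) : R) * y ^ (k + 1) =
      ((n + 2 - 2 * (k + 1)).choose (k + 1) : R) * y ^ (k + 1) +
        y * (((n - 2 * k).choose k : R) * y ^ k) := by
    intro k
    rcases le_or_gt (2 * k) n with h | h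
    · rw [show n + 3 - 2 * (k + 1) = n - 2 * k + 1 by omega,
        show n + 2 - 2 * (k + 1) = n - 2 * k by omega, Nat.choose_succ_succ']
      push_cast
      ring
    · rw [Nat.choose_eq_zero_of_lt (by omega : n + 3 - 2 * (k + 1) < k + 1),
        Nat.choose_eq_zero_of_lt (by omega : n + 2 - 2 * (k + 1) < k + 1),
        Nat.choose_eq_zero_of_lt (by omega : n - 2 * k < k)]
      simp
  rw [diagChooseSum_eq_sum_range y (by omega : n + 2 < 3 * (n + 4)),
    diagChooseSum_eq_sum_range y (by omega : n < 3 * (n + 3)), diagChooseSum, sum_range_succ',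
    sum_range_succ' _ (n + 3), mul_sum, sum_congr rfl fun k _ => pascal k, sum_add_distrib]
  simp only [mul_zero, Nat.sub_zero, Nat.choose_zero_right, Nat.cast_one, pow_zero]
  ring

lemma map_diagChooseSum {S : Type*} [CommRing S] (f : R →+* S) (y : R) (n : ℕ) :
    f (diagChooseSum y n) = diagChooseSum (f y) n := by
  simp [diagChooseSum, map_sum]

end CommRing

section Field

variable {K : Type*} [Field K]

theorem diagChooseSum_eq_lagrange {y a b c : K}
    (h₁ : a + b + c = 1) (h₂ : a * b + a * c + b * c = 0) (h₃ : a * b * c = y)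
    (hab : a ≠ b) (hac : a ≠ c) (hbc : b ≠ c) :
    ∀ n, diagChooseSum y n = a ^ (n + 2) / ((a - b) * (a - c)) +
      b ^ (n + 2) / ((b - a) * (b - c)) + c ^ (n + 2) / ((c - a) * (c - b))
  | 0 => by
    rw [diagChooseSum_zero]
    field_simp
    ring
  | 1 => by
    rw [diagChooseSum_one, ← h₁]
    field_simp
    ring
  | 2 => by
    rw [diagChooseSum_two, show (1 : K) = (a + b + c) ^ 2 - (a * b + a * c + b * c) by
      rw [h₁, h₂]; ring]
    field_simp
    ring
  | n + 3 => by
    have step : ∀ x, x ^ 3 = x ^ 2 + y → x ^ (n + 3 + 2) = x ^ (n + 2 + 2) + y * x ^ (n + 2) :=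
      fun x hx => by linear_combination x ^ (n + 2) * hx
    rw [diagChooseSum_add_three, diagChooseSum_eq_lagrange h₁ h₂ h₃ hab hac hbc (n + 2),
      diagChooseSum_eq_lagrange h₁ h₂ h₃ hab hac hbc n,
      step a (by linear_combination a ^ 2 * h₁ - a * h₂ + h₃),
      step b (by linear_combination b ^ 2 * h₁ - b * h₂ + h₃),
      step c (by linear_combination c ^ 2 * h₁ - c * h₂ + h₃)]
    ring

theorem diagChooseSum_eq_of_pow_succ {y a b c α β : K}
    (h₁ : a + b + c = 1) (h₂ : a * b + a * c + b * c = 0) (h₃ : a * b * c = y)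
    (hab : a ≠ b) (hac : a ≠ c) (hbc : b ≠ c) (hαβ : α + β = 1) {n : ℕ}
    (ha : a ^ (n + 1) = a) (hb : b ^ (n + 1) = α * b + β * c) (hc : c ^ (n + 1) = α * c + β * b) :
    diagChooseSum y n = α + β * (a ^ 2 - b * c) / ((a - b) * (a - c)) := by
  obtain rfl : β = 1 - α := by linear_combination hαβ
  rw [diagChooseSum_eq_lagrange h₁ h₂ h₃ hab hac hbc, pow_succ, ha, pow_succ, hb, pow_succ, hc]
  field_simp
  ring

/-- The roots of `t³ - t² - (a³ - a²)` are `a` and `(1 - a ± s) / 2`; the Frobenius fixes both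
of the latter when `ε = 1` and swaps them when `ε = -1`. -/
theorem diagChooseSum_pred_of_pow_char {p : ℕ} [Fact p.Prime] [CharP K p] {a s ε : K}
    (h2 : (2 : K) ≠ 0) (ha : a ≠ 0) (ha' : 3 * a - 2 ≠ 0) (hs : s ^ 2 = -3 * a ^ 2 + 2 * a + 1)
    (hs0 : s ≠ 0) (hap : a ^ p = a) (hsp : s ^ p = ε * s) :
    diagChooseSum (a ^ 3 - a ^ 2) (p - 1) = (1 + ε) / 2 + (1 - ε) / (2 * (3 * a - 2)) := by
  have h2p : (2 : K) ^ p = 2 := by rw [← frobenius_def, map_ofNat]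
  have hmul : (1 - a + s) / 2 * ((1 - a - s) / 2) = a ^ 2 - a := by
    field_simp
    linear_combination -hs
  have hD : (a - (1 - a + s) / 2) * (a - (1 - a - s) / 2) = a * (3 * a - 2) := by
    field_simp
    linear_combination -hs
  have hab : a ≠ (1 - a + s) / 2 := fun h =>
    mul_ne_zero ha ha' (by rw [← hD, ← h, sub_self, zero_mul])
  have hac : a ≠ (1 - a - s) / 2 := fun h =>
    mul_ne_zero ha ha' (by rw [← hD, ← h, sub_self, mul_zero])
  have hbc : (1 - a + s) / 2 ≠ (1 - a - s) / 2 := fun h =>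
    hs0 <| (mul_eq_zero.mp (by linear_combination (div_left_inj' h2).mp h)).resolve_left h2
  have hp : p - 1 + 1 = p := Nat.sub_add_cancel (Fact.out : p.Prime).one_le
  rw [diagChooseSum_eq_of_pow_succ (α := (1 + ε) / 2) (β := (1 - ε) / 2) (by field_simp; ring)
      (by field_simp; linear_combination -hs) (by field_simp; linear_combination -hs)
      hab hac hbc (by field_simp; ring) (by rw [hp, hap]) ?_ ?_, hmul, hD]
  · field_simp
    ring
  · rw [hp, div_pow, add_pow_char, sub_pow_char, one_pow, hap, hsp, h2p]
    field_simp
    ring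
  · rw [hp, div_pow, sub_pow_char, sub_pow_char, one_pow, hap, hsp, h2p]
    field_simp
    ring

end Field

namespace ZMod

variable {p : ℕ} [Fact p.Prime]

lemma natCast_ne_zero_of_prime {q : ℕ} (hq : q.Prime) (h : p ≠ q) : (q : ZMod p) ≠ 0 := by
  rw [Ne, natCast_eq_zero_iff, Nat.prime_dvd_prime_iff_eq Fact.out hq]
  exact h

lemma choose_three_mul {k : ℕ} (hk : 3 * k ≤ p) :
    ((3 * k).choose k : ZMod p) = (-1) ^ k * ((p - 1 - 2 * k).choose k : ZMod p) := by
  have hfac : (k ! : ZMod p) ≠ 0 := by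
    have := (Fact.out : p.Prime).two_le
    rw [Ne, natCast_eq_zero_iff, Nat.Prime.dvd_factorial Fact.out]
    omega
  have lhs : ((3 * k).choose k * k ! : ZMod p) = ∏ i ∈ range k, ((2 * k + 1 + i : ℕ) : ZMod p) := by
    rw [← Nat.cast_mul, mul_comm, ← Nat.descFactorial_eq_factorial_mul_choose,
      show 3 * k = 2 * k + k by ring, Nat.add_descFactorial_eq_ascFactorial,
      Nat.ascFactorial_eq_prod_range, Nat.cast_prod]
  have rhs : ((p - 1 - 2 * k).choose k * k ! : ZMod p) =
      ∏ i ∈ range k, -((2 * k + 1 + i : ℕ) : ZMod p) := by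
    rw [← Nat.cast_mul, mul_comm, ← Nat.descFactorial_eq_factorial_mul_choose,
      Nat.descFactorial_eq_prod_range, Nat.cast_prod]
    refine prod_congr rfl fun i hi => ?_
    rw [mem_range] at hi
    rw [show p - 1 - 2 * k - i = p - (2 * k + 1 + i) by omega, Nat.cast_sub (by omega),
      natCast_self, zero_sub]
  apply mul_right_cancel₀ hfac
  rw [lhs, mul_assoc, rhs, prod_neg, card_range, ← mul_assoc, ← pow_add, ← two_mul, pow_mul,
    neg_one_sq, one_pow, one_mul]

theorem sum_choose_three_mul_eq_diagChooseSum (x : ZMod p) :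
    ∑ k ∈ Icc 1 (p / 3), ((3 * k).choose k : ZMod p) * x ^ k = diagChooseSum (-x) (p - 1) - 1 := by
  rw [diagChooseSum_eq_sum_range (-x) (by omega : p - 1 < 3 * (p / 3 + 1)),
    Nat.range_succ_eq_Icc_zero, ← insert_Icc_add_one_left_eq_Icc (Nat.zero_le _),
    sum_insert (by simp)]
  simp only [Nat.choose_zero_right, Nat.cast_one, pow_zero, mul_one, zero_add, add_sub_cancel_left]
  refine sum_congr rfl fun k hk => ?_
  rw [choose_three_mul (by simp at hk; omega), neg_pow]
  ring

theorem diagChooseSum_pred (hp : p ≠ 2) {a : ZMod p} (ha : a ≠ 0) (ha' : 3 * a - 2 ≠ 0)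
    (hd : -3 * a ^ 2 + 2 * a + 1 ≠ 0) :
    diagChooseSum (a ^ 3 - a ^ 2) (p - 1) =
      (1 + quadraticChar (ZMod p) (-3 * a ^ 2 + 2 * a + 1)) / 2 +
        (1 - quadraticChar (ZMod p) (-3 * a ^ 2 + 2 * a + 1)) / (2 * (3 * a - 2)) := by
  set d := -3 * a ^ 2 + 2 * a + 1
  let ψ : ZMod p →+* AlgebraicClosure (ZMod p) := algebraMap _ _
  obtain ⟨s, hs⟩ := IsAlgClosed.exists_pow_nat_eq (ψ d) two_pos
  have h2 : (2 : ZMod p) ≠ 0 := mod_cast natCast_ne_zero_of_prime Nat.prime_two hp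
  -- Euler's criterion: `s ^ p = s * d ^ (p / 2) = χ d * s`.
  have hsp : s ^ p = ψ (quadraticChar (ZMod p) d) * s := by
    rw [quadraticChar_eq_pow_of_char_ne_two' (by rwa [ringChar_zmod_n]), card, map_pow, ← hs,
      ← pow_mul, ← pow_succ,
      Nat.two_mul_div_two_add_one_of_odd ((Fact.out : p.Prime).odd_of_ne_two hp)]
  apply ψ.injective
  simp only [map_diagChooseSum, map_add, map_sub, map_div₀, map_mul, map_pow, map_one, map_ofNat]
  refine diagChooseSum_pred_of_pow_char (by simpa only [map_ofNat] using (map_ne_zero ψ).mpr h2)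
    ((map_ne_zero ψ).mpr ha)
    (by simpa only [map_sub, map_mul, map_ofNat] using (map_ne_zero ψ).mpr ha')
    (by simp only [hs, d, map_add, map_neg, map_mul, map_pow, map_ofNat, map_one]) ?_
    (by rw [← map_pow, pow_card]) hsp
  rintro rfl
  exact hd ((map_eq_zero ψ).mp (by rw [← hs, zero_pow two_ne_zero]))

theorem sum_choose_three_mul_mul_pow_sq_sub_cube (hp : p ≠ 2) {a e c C : ZMod p} (ha : a ≠ 0)
    (ha' : 3 * a - 2 ≠ 0) (hd : -3 * a ^ 2 + 2 * a + 1 = e * c ^ 2) (he : e ≠ 0) (hc : c ≠ 0)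
    (hC : C * (2 * (3 * a - 2)) = 3 * a - 3) :
    ∑ k ∈ Icc 1 (p / 3), ((3 * k).choose k : ZMod p) * (a ^ 2 - a ^ 3) ^ k =
      C * ((quadraticChar (ZMod p) e : ℤ) - 1) := by
  have h2 : (2 : ZMod p) ≠ 0 := mod_cast natCast_ne_zero_of_prime Nat.prime_two hp
  obtain rfl : C = (3 * a - 3) / (2 * (3 * a - 2)) := by
    rw [eq_div_iff (by simp [h2, ha'])]; exact hC
  have hχ : quadraticChar (ZMod p) (-3 * a ^ 2 + 2 * a + 1) = quadraticChar (ZMod p) e := by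
    rw [hd, map_mul, quadraticChar_sq_one' hc, mul_one]
  rw [sum_choose_three_mul_eq_diagChooseSum, neg_sub,
    diagChooseSum_pred hp ha ha' (hd ▸ mul_ne_zero he (pow_ne_zero 2 hc)), hχ]
  field_simp
  ring

end ZMod

section Cases

open ZMod

variable {p : ℕ} [Fact p.Prime]

theorem sum_choose_three_mul_mul_pow_36 (hp : 3 < p) (h11 : p ≠ 11) :
    ∑ k ∈ Icc 1 (p / 3), ((3 * k).choose k : ZMod p) * 36 ^ k =
      6 / 11 * ((quadraticChar (ZMod p) (-2) : ℤ) - 1) := by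
  have h2 : (2 : ZMod p) ≠ 0 :=
    mod_cast natCast_ne_zero_of_prime Nat.prime_two (by omega : p ≠ 2)
  have h3 : (3 : ZMod p) ≠ 0 :=
    mod_cast natCast_ne_zero_of_prime Nat.prime_three (by omega : p ≠ 3)
  have h11 : (11 : ZMod p) ≠ 0 := mod_cast natCast_ne_zero_of_prime (by norm_num) h11
  rw [show (36 : ZMod p) = (-3) ^ 2 - (-3) ^ 3 by norm_num]
  exact sum_choose_three_mul_mul_pow_sq_sub_cube (by omega) (by simpa) (by norm_num; simpa)
    (c := 2 ^ 2) (by norm_num) (by simpa) (pow_ne_zero 2 h2) (by field_simp; norm_num)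

theorem sum_choose_three_mul_mul_pow_neg_100 (hp : 3 < p) (h13 : p ≠ 13) :
    ∑ k ∈ Icc 1 (p / 3), ((3 * k).choose k : ZMod p) * (-100) ^ k =
      6 / 13 * ((-1 : ZMod p) ^ ((p - 1) / 2) - 1) := by
  obtain rfl | h5 := eq_or_ne p 5
  -- the parameter `a = 5` below vanishes mod 5
  · decide +revert
  have h2 : (2 : ZMod p) ≠ 0 :=
    mod_cast natCast_ne_zero_of_prime Nat.prime_two (by omega : p ≠ 2)
  have h5 : (5 : ZMod p) ≠ 0 := mod_cast natCast_ne_zero_of_prime (by norm_num) h5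
  have h13 : (13 : ZMod p) ≠ 0 := mod_cast natCast_ne_zero_of_prime (by norm_num) h13
  rw [show (-100 : ZMod p) = 5 ^ 2 - 5 ^ 3 by norm_num,
    show (p - 1) / 2 = Fintype.card (ZMod p) / 2 by
      have := Nat.odd_iff.mp ((Fact.out : p.Prime).odd_of_ne_two (by omega))
      rw [ZMod.card]; omega,
    ← quadraticChar_eq_pow_of_char_ne_two' (by rw [ringChar_zmod_n]; omega)]
  exact sum_choose_three_mul_mul_pow_sq_sub_cube (by omega) h5 (by norm_num; simpa) (c := 2 ^ 3)
    (by norm_num) (by simp) (pow_ne_zero 3 h2) (by field_simp; norm_num)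

theorem sum_choose_three_mul_mul_pow_one_div_8 (hp : 3 < p) :
    ∑ k ∈ Icc 1 (p / 3), ((3 * k).choose k : ZMod p) * (1 / 8) ^ k =
      3 / 2 * ((quadraticChar (ZMod p) 5 : ℤ) - 1) := by
  obtain rfl | h5 := eq_or_ne p 5
  -- the discriminant `5 / 4` below vanishes mod 5
  · rw [show (5 : ZMod 5) = 0 from rfl, quadraticChar_zero, Int.cast_zero, div_eq_inv_mul,
      div_eq_inv_mul, show (8 : ZMod 5)⁻¹ = 2 from ZMod.inv_eq_of_mul_eq_one 5 _ _ rfl,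
      show (2 : ZMod 5)⁻¹ = 3 from ZMod.inv_eq_of_mul_eq_one 5 _ _ rfl]
    rfl
  have h2 : (2 : ZMod p) ≠ 0 :=
    mod_cast natCast_ne_zero_of_prime Nat.prime_two (by omega : p ≠ 2)
  have h5 : (5 : ZMod p) ≠ 0 := mod_cast natCast_ne_zero_of_prime (by norm_num) h5
  rw [show (1 / 8 : ZMod p) = (1 / 2) ^ 2 - (1 / 2) ^ 3 by
    rw [show (8 : ZMod p) = 2 ^ 3 by norm_num]; field_simp; norm_num]
  exact sum_choose_three_mul_mul_pow_sq_sub_cube (by omega) (by simpa)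
    (by field_simp; norm_num [h2]) (c := 1 / 2) (by field_simp; norm_num) h5 (by simpa)
    (by field_simp; norm_num)

theorem sum_choose_three_mul_mul_pow_three_div_8 (hp : 3 < p) (h7 : p ≠ 7) :
    ∑ k ∈ Icc 1 (p / 3), ((3 * k).choose k : ZMod p) * (3 / 8) ^ k =
      9 / 14 * ((quadraticChar (ZMod p) (-3) : ℤ) - 1) := by
  have h2 : (2 : ZMod p) ≠ 0 :=
    mod_cast natCast_ne_zero_of_prime Nat.prime_two (by omega : p ≠ 2)
  have h3 : (3 : ZMod p) ≠ 0 :=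
    mod_cast natCast_ne_zero_of_prime Nat.prime_three (by omega : p ≠ 3)
  have h7 : (7 : ZMod p) ≠ 0 := mod_cast natCast_ne_zero_of_prime (by norm_num) h7
  rw [show (3 / 8 : ZMod p) = (-1 / 2) ^ 2 - (-1 / 2) ^ 3 by
    rw [show (8 : ZMod p) = 2 ^ 3 by norm_num]; field_simp; norm_num,
    show (14 : ZMod p) = 2 * 7 by norm_num]
  exact sum_choose_three_mul_mul_pow_sq_sub_cube (by omega) (by simpa)
    (by field_simp; norm_num [h2, h7]) (c := 1 / 2) (by field_simp; norm_num) (by simpa) (by simpa)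
    (by field_simp; norm_num)

end Cases

theorem stmt_8 (p : ℕ) [Fact p.Prime] (hp : 3 < p) :
    (p ≠ 11 →
      ∑ k ∈ Finset.Icc 1 (p / 3), ((3 * k).choose k : ZMod p) * 36 ^ k =
        6 / 11 * (((quadraticChar (ZMod p) (-2) : ℤ) : ZMod p) - 1)) ∧
    (p ≠ 13 →
      ∑ k ∈ Finset.Icc 1 (p / 3), ((3 * k).choose k : ZMod p) * (-100) ^ k =
        6 / 13 * ((-1 : ZMod p) ^ ((p - 1) / 2) - 1)) ∧
    (∑ k ∈ Finset.Icc 1 (p / 3), ((3 * k).choose k : ZMod p) * (1 / 8) ^ k =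
        3 / 2 * (((quadraticChar (ZMod p) 5 : ℤ) : ZMod p) - 1)) ∧
    (p ≠ 7 →
      ∑ k ∈ Finset.Icc 1 (p / 3), ((3 * k).choose k : ZMod p) * (3 / 8) ^ k =
        9 / 14 * (((quadraticChar (ZMod p) (-3) : ℤ) : ZMod p) - 1)) :=
  ⟨sum_choose_three_mul_mul_pow_36 hp, sum_choose_three_mul_mul_pow_neg_100 hp,
    sum_choose_three_mul_mul_pow_one_div_8 hp, sum_choose_three_mul_mul_pow_three_div_8 hp⟩
end

section
/- Let p > 3 be a prime and let m ∈ ℤ/pℤ with (2m+1)² ∉ {0, −3, 9, −27} in ℤ/pℤ. Then the congruence x³ + 3(m−1)(m+2)·x + 3(m−1)(m+2) ≡ 0 (mod p) has exactly three solutions x in ℤ/pℤ if and only if p ≡ 1 (mod 3) and ((m−1)/(m+2))^{(p−1)/3} = 1 in ℤ/pℤ. -/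
/-!
Write `a = m - 1` and `b = m + 2`: the cubic is `X³ + 3abX + ab(b - a)`, with discriminant
`-27 (ab(a + b))²`. By Cardano, if `ω² + ω + 1 = 0` and `b s³ = a`, its roots are
`ωᵏ u + ω⁻ᵏ v` with `u = b s²`, `v = -b s`, and they are distinct since the discriminant is
nonzero. Conversely, if `x, y, z` are three distinct roots, the discriminant shows that `-3` is a
square, which produces `ω`, and the Lagrange resolvent `x + ωy + ω²z` has cube `27a²b` or
`-27ab²`, so `a / b` is a cube. In `ZMod p` a primitive cube root of unity exists iff
`3 ∣ p - 1`, and since the unit group is cyclic, cubes are exactly the elements killed by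
the power `(p - 1) / 3`.
-/

theorem IsCyclic.exists_pow_eq_iff_pow_eq_one {G : Type*} [CommGroup G] [IsCyclic G] [Finite G]
    {k : ℕ} (hk : k ∣ Nat.card G) (g : G) :
    (∃ h, h ^ k = g) ↔ g ^ (Nat.card G / k) = 1 := by
  have hle : (powMonoidHom k : G →* G).range ≤ (powMonoidHom (Nat.card G / k)).ker := by
    rintro _ ⟨h, rfl⟩
    simp [← pow_mul, Nat.mul_div_cancel' hk, pow_card_eq_one']
  have hcard : Nat.card (powMonoidHom (Nat.card G / k) : G →* G).ker ≤
      Nat.card (powMonoidHom k : G →* G).range := by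
    rw [IsCyclic.card_powMonoidHom_ker, IsCyclic.card_powMonoidHom_range, Nat.gcd_eq_right hk,
      Nat.gcd_eq_right (Nat.div_dvd_of_dvd hk)]
  exact SetLike.ext_iff.mp (Subgroup.eq_of_le_of_card_ge hle hcard) g

theorem FiniteField.exists_pow_eq_iff_pow_eq_one {F : Type*} [Field F] [Fintype F] {k : ℕ}
    (hk : k ∣ Fintype.card F - 1) {a : F} (ha : a ≠ 0) :
    (∃ t, t ^ k = a) ↔ a ^ ((Fintype.card F - 1) / k) = 1 := by
  have hk0 : k ≠ 0 := by
    rintro rfl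
    have := Fintype.one_lt_card (α := F)
    omega
  classical
  rw [← Fintype.card_units, ← Nat.card_eq_fintype_card] at hk ⊢
  have := IsCyclic.exists_pow_eq_iff_pow_eq_one hk (Units.mk0 a ha)
  rw [← Units.val_eq_one, Units.val_pow_eq_pow_val, Units.val_mk0] at this
  rw [← this]
  constructor
  · rintro ⟨t, rfl⟩
    exact ⟨Units.mk0 t (ne_zero_pow hk0 ha), Units.ext (by simp)⟩
  · rintro ⟨u, hu⟩
    exact ⟨u, by simpa using congrArg Units.val hu⟩

theorem FiniteField.exists_sq_add_self_add_one_eq_zero_iff {F : Type*} [Field F] [Fintype F]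
    (h3 : (3 : F) ≠ 0) : (∃ ω : F, ω ^ 2 + ω + 1 = 0) ↔ 3 ∣ Fintype.card F - 1 := by
  classical
  rw [← Fintype.card_units]
  constructor
  · rintro ⟨ω, hω⟩
    have hω0 : ω ≠ 0 := by rintro rfl; simp at hω
    have hω1 : ω ≠ 1 := by rintro rfl; exact h3 (by linear_combination hω)
    have hord : orderOf (Units.mk0 ω hω0) = 3 :=
      orderOf_eq_prime (Units.ext (by
        rw [Units.val_pow_eq_pow_val, Units.val_mk0, Units.val_one]
        linear_combination (ω - 1) * hω))
        (by simpa [Units.ext_iff] using hω1)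
    exact hord ▸ orderOf_dvd_card
  · intro h
    have : Fact (Nat.Prime 3) := ⟨Nat.prime_three⟩
    obtain ⟨u, hu⟩ := exists_prime_orderOf_dvd_card 3 h
    have hu3 : (u : F) ^ 3 = 1 := by
      rw [← Units.val_pow_eq_pow_val, ← hu, pow_orderOf_eq_one, Units.val_one]
    have hu1 : (u : F) - 1 ≠ 0 := by
      rw [sub_ne_zero, Ne, Units.val_eq_one]
      rintro rfl
      simp at hu
    exact ⟨u, mul_left_cancel₀ hu1 (by linear_combination hu3)⟩

section DepressedCubic

variable {R : Type*} [CommRing R]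

def CubicRoots (P Q x y z : R) : Prop :=
  x + y + z = 0 ∧ x * y + y * z + z * x = P ∧ x * y * z = -Q

variable {P Q x y z : R}

theorem CubicRoots.cubic_eq_mul (h : CubicRoots P Q x y z) (X : R) :
    X ^ 3 + P * X + Q = (X - x) * (X - y) * (X - z) := by
  obtain ⟨h1, h2, h3⟩ := h
  linear_combination X ^ 2 * h1 - X * h2 + h3

theorem CubicRoots.discrim_eq (h : CubicRoots P Q x y z) :
    ((x - y) * (y - z) * (z - x)) ^ 2 = -4 * P ^ 3 - 27 * Q ^ 2 := by
  obtain ⟨h1, h2, h3⟩ := h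
  rw [← h2, show Q = -(x * y * z) by linear_combination h3,
    show z = -x - y by linear_combination h1]
  ring

theorem cubicRoots_cardano {ω : R} (hω : ω ^ 2 + ω + 1 = 0) (u v : R) :
    CubicRoots (-3 * u * v) (-(u ^ 3 + v ^ 3)) (u + v) (ω * u + ω ^ 2 * v)
      (ω ^ 2 * u + ω * v) := by
  refine ⟨?_, ?_, ?_⟩ <;> grind

theorem CubicRoots.resolvent {a b ω : R} (hω : ω ^ 2 + ω + 1 = 0)
    (h : CubicRoots (3 * a * b) (a * b * (b - a)) x y z) :
    ((x + ω * y + ω ^ 2 * z) ^ 3 - 27 * a ^ 2 * b) *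
      ((x + ω * y + ω ^ 2 * z) ^ 3 + 27 * a * b ^ 2) = 0 := by
  obtain ⟨h1, h2, h3⟩ := h
  set r := x + ω * y + ω ^ 2 * z
  set r' := x + ω ^ 2 * y + ω * z
  have hprod : r * r' = -9 * a * b := by grind
  have hsum : r ^ 3 + r' ^ 3 = 27 * (a ^ 2 * b - a * b ^ 2) := by grind
  linear_combination
    r ^ 3 * hsum - ((r * r') ^ 2 - 9 * a * b * (r * r') + 81 * a ^ 2 * b ^ 2) * hprod

variable [IsDomain R]

theorem CubicRoots.of_ne (hxy : x ≠ y) (hxz : x ≠ z) (hyz : y ≠ z) (hx : x ^ 3 + P * x + Q = 0)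
    (hy : y ^ 3 + P * y + Q = 0) (hz : z ^ 3 + P * z + Q = 0) : CubicRoots P Q x y z := by
  have hxy' : x ^ 2 + x * y + y ^ 2 = -P :=
    mul_left_cancel₀ (sub_ne_zero.2 hxy) (by linear_combination hx - hy)
  have hyz' : y ^ 2 + y * z + z ^ 2 = -P :=
    mul_left_cancel₀ (sub_ne_zero.2 hyz) (by linear_combination hy - hz)
  have h1 : x + y + z = 0 :=
    mul_left_cancel₀ (sub_ne_zero.2 hxz) (by linear_combination hxy' - hyz')
  exact ⟨h1, by linear_combination (x + y) * h1 - hxy',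
    by linear_combination hx + x * y * h1 - x * hxy'⟩

theorem CubicRoots.setOf_eq (h : CubicRoots P Q x y z) :
    {X : R | X ^ 3 + P * X + Q = 0} = {x, y, z} := by
  ext X
  simp only [Set.mem_ofPred_eq, Set.mem_insert_iff, Set.mem_singleton_iff, h.cubic_eq_mul,
    mul_eq_zero, sub_eq_zero, or_assoc]

theorem CubicRoots.discrim_ne_zero_iff (h : CubicRoots P Q x y z) :
    -4 * P ^ 3 - 27 * Q ^ 2 ≠ 0 ↔ (x ≠ y ∧ y ≠ z) ∧ z ≠ x := by
  rw [← h.discrim_eq, pow_ne_zero_iff two_ne_zero, mul_ne_zero_iff, mul_ne_zero_iff,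
    sub_ne_zero, sub_ne_zero, sub_ne_zero]

theorem ncard_setOf_cubic_eq_three_iff :
    {X : R | X ^ 3 + P * X + Q = 0}.ncard = 3 ↔
      -4 * P ^ 3 - 27 * Q ^ 2 ≠ 0 ∧ ∃ x y z, CubicRoots P Q x y z := by
  constructor
  · rw [Set.ncard_eq_three]
    rintro ⟨x, y, z, hxy, hxz, hyz, hS⟩
    have hroot : ∀ X ∈ ({x, y, z} : Set R), X ^ 3 + P * X + Q = 0 := fun X hX => hS.superset hX
    have h := CubicRoots.of_ne hxy hxz hyz (hroot x (by simp)) (hroot y (by simp))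
      (hroot z (by simp))
    exact ⟨h.discrim_ne_zero_iff.2 ⟨⟨hxy, hyz⟩, hxz.symm⟩, x, y, z, h⟩
  · rintro ⟨hD, x, y, z, h⟩
    obtain ⟨⟨hxy, hyz⟩, hzx⟩ := h.discrim_ne_zero_iff.1 hD
    exact Set.ncard_eq_three.2 ⟨x, y, z, hxy, hzx.symm, hyz, h.setOf_eq⟩

end DepressedCubic

section Field

variable {F : Type*} [Field F]

theorem exists_sq_add_self_add_one_eq_zero_of_sq_eq_neg_three (h2 : (2 : F) ≠ 0) {c : F}
    (hc : c ^ 2 = -3) : ∃ ω : F, ω ^ 2 + ω + 1 = 0 :=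
  ⟨(c - 1) / 2, by field_simp; linear_combination hc⟩

theorem CubicRoots.exists_pow_three_eq_div (h3 : (3 : F) ≠ 0) {a b ω x y z : F} (ha : a ≠ 0)
    (hb : b ≠ 0) (hω : ω ^ 2 + ω + 1 = 0) (h : CubicRoots (3 * a * b) (a * b * (b - a)) x y z) :
    ∃ t, t ^ 3 = a / b := by
  have h27 : (27 : F) ≠ 0 := by simpa [show (27 : F) = 3 ^ 3 by norm_num] using pow_ne_zero 3 h3
  rcases mul_eq_zero.1 (h.resolvent hω) with hr | hr
  · have hr' := sub_eq_zero.1 hr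
    have hr0 : x + ω * y + ω ^ 2 * z ≠ 0 := fun h0 => by
      rw [h0] at hr'
      simp [ha, hb, h27] at hr'
    exact ⟨3 * a / (x + ω * y + ω ^ 2 * z), by rw [div_pow, hr']; field_simp; ring⟩
  · exact ⟨-(x + ω * y + ω ^ 2 * z) / (3 * b), by
      rw [div_pow, neg_pow, eq_neg_of_add_eq_zero_left hr]; field_simp; ring⟩

theorem ncard_setOf_cubic_eq_three_iff_exists_pow_three_eq (h2 : (2 : F) ≠ 0) (h3 : (3 : F) ≠ 0)
    {a b : F} (hab : a * b * (a + b) ≠ 0) :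
    {x : F | x ^ 3 + 3 * a * b * x + a * b * (b - a) = 0}.ncard = 3 ↔
      (∃ ω : F, ω ^ 2 + ω + 1 = 0) ∧ ∃ t, t ^ 3 = a / b := by
  have ha : a ≠ 0 := left_ne_zero_of_mul (left_ne_zero_of_mul hab)
  have hb : b ≠ 0 := right_ne_zero_of_mul (left_ne_zero_of_mul hab)
  have hapb : a + b ≠ 0 := right_ne_zero_of_mul hab
  have hD : -4 * (3 * a * b) ^ 3 - 27 * (a * b * (b - a)) ^ 2 =
      -3 * (3 * (a * b * (a + b))) ^ 2 := by
    ring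
  rw [ncard_setOf_cubic_eq_three_iff, hD]
  constructor
  · rintro ⟨-, x, y, z, h⟩
    obtain ⟨ω, hω⟩ := exists_sq_add_self_add_one_eq_zero_of_sq_eq_neg_three h2
      (c := (x - y) * (y - z) * (z - x) / (3 * (a * b * (a + b))))
      (by rw [div_pow, h.discrim_eq, hD]; field_simp)
    exact ⟨⟨ω, hω⟩, h.exists_pow_three_eq_div h3 ha hb hω⟩
  · rintro ⟨⟨ω, hω⟩, t, ht⟩
    have hbt : b * t ^ 3 = a := by rw [ht]; field_simp
    have h := cubicRoots_cardano hω (b * t ^ 2) (-(b * t))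
    rw [show -3 * (b * t ^ 2) * -(b * t) = 3 * a * b by linear_combination 3 * b * hbt,
      show -((b * t ^ 2) ^ 3 + (-(b * t)) ^ 3) = a * b * (b - a) by
        linear_combination (b ^ 2 - b ^ 2 * t ^ 3 - a * b) * hbt] at h
    exact ⟨by simp [h3, hab], _, _, _, h⟩

end Field

theorem stmt_12_general (p : ℕ) [Fact p.Prime] (hp : 3 < p) (m : ZMod p)
    (h0 : (2 * m + 1) ^ 2 ≠ 0)
    (h2 : (2 * m + 1) ^ 2 ≠ 9) :
    ({x : ZMod p | x ^ 3 + 3 * (m - 1) * (m + 2) * x + 3 * (m - 1) * (m + 2) = 0} :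
        Set (ZMod p)).ncard = 3 ↔
      p % 3 = 1 ∧ ((m - 1) / (m + 2)) ^ ((p - 1) / 3) = 1 := by
  have natCast_ne_zero {k : ℕ} (hk : 0 < k) (hkp : k < p) : (k : ZMod p) ≠ 0 := by
    rw [Ne, ZMod.natCast_eq_zero_iff]
    exact Nat.not_dvd_of_pos_of_lt hk hkp
  have hp2 : (2 : ZMod p) ≠ 0 := by exact_mod_cast natCast_ne_zero two_pos (by omega)
  have hp3 : (3 : ZMod p) ≠ 0 := by exact_mod_cast natCast_ne_zero three_pos hp
  have hab : (m - 1) * (m + 2) ≠ 0 := fun h => h2 (by linear_combination 4 * h)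
  have hcubic := ncard_setOf_cubic_eq_three_iff_exists_pow_three_eq hp2 hp3
    (mul_ne_zero hab fun h => h0 (by linear_combination (2 * m + 1) * h))
  rw [show (m - 1) * (m + 2) * ((m + 2) - (m - 1)) = 3 * (m - 1) * (m + 2) by ring] at hcubic
  rw [hcubic, FiniteField.exists_sq_add_self_add_one_eq_zero_iff hp3, ZMod.card,
    show 3 ∣ p - 1 ↔ p % 3 = 1 by omega]
  refine and_congr_right fun hp1 => ?_
  rw [FiniteField.exists_pow_eq_iff_pow_eq_one (by rw [ZMod.card]; omega)
    (div_ne_zero (left_ne_zero_of_mul hab) (right_ne_zero_of_mul hab)), ZMod.card]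

theorem stmt_12 (p : ℕ) [Fact p.Prime] (hp : 3 < p) (m : ZMod p)
    (h0 : (2 * m + 1) ^ 2 ≠ 0) (h1 : (2 * m + 1) ^ 2 ≠ -3)
    (h2 : (2 * m + 1) ^ 2 ≠ 9) (h3 : (2 * m + 1) ^ 2 ≠ -27) :
    ({x : ZMod p | x ^ 3 + 3 * (m - 1) * (m + 2) * x + 3 * (m - 1) * (m + 2) = 0} :
        Set (ZMod p)).ncard = 3 ↔
      p % 3 = 1 ∧ ((m - 1) / (m + 2)) ^ ((p - 1) / 3) = 1 :=
  stmt_12_general p hp m h0 h2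
end
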